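/- arXiv:2211.11382 — 6 statements merged into one kernel-verified Lean document; each statement's English description precedes it below -/
import Mathlib

section
/- Let K be an m×m real matrix with nonnegative off-diagonal entries whose rows sum to zero (a transition rate matrix), and suppose K admits a unique stationary distribution π. Then the matrix K + Π is invertible, and its inverse is a generalized inverse of K, i.e. K (K + Π)⁻¹ K = K. -/
open Matrix BigOperators

/-- Let `K` be an `m × m` real transition rate matrix (nonnegative
off-diagonal entries, rows summing to zero) admitting a unique stationary distribution `π`.
Then `K + Π` (where `Π` is the matrix each of whose rows equals `π`) is invertible and its
inverse is a generalized inverse of `K`, i.e. `K * (K + Π)⁻¹ * K = K`. -/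
theorem stationary_generalized_inverse {m : ℕ}
    (K : Matrix (Fin m) (Fin m) ℝ)
    (hoff : ∀ y y' : Fin m, y ≠ y' → 0 ≤ K y y')
    (hrow : ∀ y : Fin m, ∑ y' : Fin m, K y y' = 0)
    (π : Fin m → ℝ)
    (hπ_nonneg : ∀ y, 0 ≤ π y)
    (hπ_sum : ∑ y, π y = 1)
    (hπ_stat : ∀ y' : Fin m, ∑ y, π y * K y y' = 0)
    (hπ_unique : ∀ π' : Fin m → ℝ,
      (∀ y, 0 ≤ π' y) → (∑ y, π' y = 1) → (∀ y' : Fin m, ∑ y, π' y * K y y' = 0) →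
      π' = π) :
    IsUnit (K + Matrix.of fun _ y' : Fin m => π y') ∧
      K * (K + Matrix.of fun _ y' : Fin m => π y')⁻¹ * K = K := by
  classical
  set Pi : Matrix (Fin m) (Fin m) ℝ := Matrix.of fun _ y' : Fin m => π y' with hPidef
  set A : Matrix (Fin m) (Fin m) ℝ := K + Pi with hAdef
  -- diagonal entries of K are nonpositive
  have hdiag : ∀ y : Fin m, K y y ≤ 0 := by
    intro y
    have h1 : K y y + ∑ y' ∈ Finset.univ.erase y, K y y' = 0 := by
      rw [Finset.add_sum_erase _ _ (Finset.mem_univ y)]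
      exact hrow y
    have h2 : 0 ≤ ∑ y' ∈ Finset.univ.erase y, K y y' :=
      Finset.sum_nonneg fun y' hy' => hoff y y' (Finset.ne_of_mem_erase hy').symm
    linarith
  -- choose h > 0 so that I + h • K is entrywise nonneg
  set C : ℝ := ∑ y : Fin m, (-K y y) with hCdef
  have hC0 : 0 ≤ C := Finset.sum_nonneg fun y _ => by linarith [hdiag y]
  set h : ℝ := 1 / (1 + C) with hhdef
  have hh0 : 0 < h := by positivity
  set P : Matrix (Fin m) (Fin m) ℝ :=
    Matrix.of fun z y' : Fin m => (if z = y' then (1:ℝ) else 0) + h * K z y' with hPdef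
  have hPnonneg : ∀ z y' : Fin m, 0 ≤ P z y' := by
    intro z y'
    by_cases hzy : z = y'
    · subst hzy
      simp only [P, Matrix.of_apply, if_pos rfl]
      have hle : -K z z ≤ C := by
        refine Finset.single_le_sum (f := fun y => -K y y)
          (fun y _ => neg_nonneg.mpr (hdiag y)) (Finset.mem_univ z)
      have hml : -(h * K z z) ≤ h * C := by
        rw [← mul_neg]
        exact mul_le_mul_of_nonneg_left hle (le_of_lt hh0)
      have hhC : h * C < 1 := by
        rw [hhdef]
        rw [div_mul_eq_mul_div, one_mul, div_lt_one (by linarith)]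
        linarith
      simp only [if_true]
      linarith
    · simp only [P, Matrix.of_apply, if_neg hzy]
      have := hoff z y' hzy
      positivity
  have hProw : ∀ z : Fin m, ∑ y' : Fin m, P z y' = 1 := by
    intro z
    simp only [P, Matrix.of_apply]
    rw [Finset.sum_add_distrib, ← Finset.mul_sum, hrow z, mul_zero, add_zero]
    simp
  -- key: left kernel of A is trivial
  have hker : ∀ w : Fin m → ℝ, (∀ y', ∑ z, w z * A z y' = 0) → w = 0 := by
    intro w hw
    have hwA : ∀ y', (∑ z, w z * K z y') + (∑ z, w z) * π y' = 0 := by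
      intro y'
      have := hw y'
      simp only [A, Pi, Matrix.add_apply, Matrix.of_apply, mul_add] at this
      rw [Finset.sum_add_distrib] at this
      rw [← this, Finset.sum_mul]
    -- total sum is zero
    have hs : ∑ z, w z = 0 := by
      have h1 : ∑ y' : Fin m, ((∑ z, w z * K z y') + (∑ z, w z) * π y') = 0 :=
        Finset.sum_eq_zero fun y' _ => hwA y'
      rw [Finset.sum_add_distrib, Finset.sum_comm] at h1
      have h2 : ∑ z : Fin m, ∑ y' : Fin m, w z * K z y' = 0 := by
        refine Finset.sum_eq_zero fun z _ => ?_
        rw [← Finset.mul_sum, hrow z, mul_zero]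
      rw [h2, zero_add, ← Finset.mul_sum, hπ_sum, mul_one] at h1
      exact h1
    have hwK : ∀ y', ∑ z, w z * K z y' = 0 := by
      intro y'
      have := hwA y'
      rw [hs, zero_mul, add_zero] at this
      exact this
    -- w is fixed by P
    have hwP : ∀ y', ∑ z, w z * P z y' = w y' := by
      intro y'
      simp only [P, Matrix.of_apply, mul_add]
      rw [Finset.sum_add_distrib]
      have h1 : ∑ z : Fin m, w z * (if z = y' then (1:ℝ) else 0) = w y' := by
        rw [Finset.sum_congr rfl (fun z _ => by rw [mul_ite, mul_one, mul_zero])]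
        rw [Finset.sum_ite_eq' Finset.univ y' w, if_pos (Finset.mem_univ y')]
      have h2 : ∑ z : Fin m, w z * (h * K z y') = 0 := by
        rw [Finset.sum_congr rfl (fun z _ => by ring_nf : ∀ z ∈ Finset.univ, w z * (h * K z y') = h * (w z * K z y'))]
        rw [← Finset.mul_sum, hwK y', mul_zero]
      rw [h1, h2, add_zero]
    -- |w| is fixed by P
    have habs_le : ∀ y', |w y'| ≤ ∑ z, |w z| * P z y' := by
      intro y'
      calc |w y'| = |∑ z, w z * P z y'| := by rw [hwP y']
        _ ≤ ∑ z, |w z * P z y'| := Finset.abs_sum_le_sum_abs _ _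
        _ = ∑ z, |w z| * P z y' := by
            refine Finset.sum_congr rfl fun z _ => ?_
            rw [abs_mul, abs_of_nonneg (hPnonneg z y')]
    have habs_eq : ∀ y', ∑ z, |w z| * P z y' = |w y'| := by
      have hsum_eq : ∑ y' : Fin m, ((∑ z, |w z| * P z y') - |w y'|) = 0 := by
        rw [Finset.sum_sub_distrib, Finset.sum_comm]
        have : ∑ z : Fin m, ∑ y' : Fin m, |w z| * P z y' = ∑ z : Fin m, |w z| := by
          refine Finset.sum_congr rfl fun z _ => ?_
          rw [← Finset.mul_sum, hProw z, mul_one]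
        rw [this, sub_self]
      intro y'
      have hterm := (Finset.sum_eq_zero_iff_of_nonneg
        (fun y' _ => sub_nonneg.mpr (habs_le y'))).mp hsum_eq y' (Finset.mem_univ y')
      linarith [sub_eq_zero.mp hterm]
    -- hence |w| is in the left kernel of K
    have habsK : ∀ y', ∑ z, |w z| * K z y' = 0 := by
      intro y'
      have := habs_eq y'
      simp only [P, Matrix.of_apply, mul_add] at this
      rw [Finset.sum_add_distrib] at this
      have h1 : ∑ z : Fin m, |w z| * (if z = y' then (1:ℝ) else 0) = |w y'| := by
        rw [Finset.sum_congr rfl (fun z _ => by rw [mul_ite, mul_one, mul_zero])]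
        rw [Finset.sum_ite_eq' Finset.univ y' (fun z => |w z|), if_pos (Finset.mem_univ y')]
      have h2 : ∑ z : Fin m, |w z| * (h * K z y') = h * ∑ z, |w z| * K z y' := by
        rw [Finset.mul_sum]
        exact Finset.sum_congr rfl fun z _ => by ring
      rw [h1, h2] at this
      have : h * ∑ z, |w z| * K z y' = 0 := by linarith
      exact (mul_eq_zero.mp this).resolve_left (ne_of_gt hh0)
    -- split into positive and negative parts
    set wp : Fin m → ℝ := fun z => (|w z| + w z) / 2 with hwpdef
    set wm : Fin m → ℝ := fun z => (|w z| - w z) / 2 with hwmdef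
    have hwp_nonneg : ∀ z, 0 ≤ wp z := fun z => by
      have := neg_abs_le (w z); simp only [wp]; linarith
    have hwm_nonneg : ∀ z, 0 ≤ wm z := fun z => by
      have := le_abs_self (w z); simp only [wm]; linarith
    have hwpK : ∀ y', ∑ z, wp z * K z y' = 0 := by
      intro y'
      have : ∑ z, wp z * K z y' = ((∑ z, |w z| * K z y') + ∑ z, w z * K z y') / 2 := by
        rw [← Finset.sum_add_distrib, Finset.sum_div]
        exact Finset.sum_congr rfl fun z _ => by simp only [wp]; ring
      rw [this, habsK y', hwK y']; norm_num
    have hwmK : ∀ y', ∑ z, wm z * K z y' = 0 := by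
      intro y'
      have : ∑ z, wm z * K z y' = ((∑ z, |w z| * K z y') - ∑ z, w z * K z y') / 2 := by
        rw [← Finset.sum_sub_distrib, Finset.sum_div]
        exact Finset.sum_congr rfl fun z _ => by simp only [wm]; ring
      rw [this, habsK y', hwK y']; norm_num
    set t : ℝ := ∑ z, wp z with htdef
    have ht0 : 0 ≤ t := Finset.sum_nonneg fun z _ => hwp_nonneg z
    have hdiff : ∀ z, wp z - wm z = w z := fun z => by simp only [wp, wm]; ring
    have hwm_sum : ∑ z, wm z = t := by
      have h1 : ∑ z, (wp z - wm z) = 0 := by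
        rw [Finset.sum_congr rfl fun z _ => hdiff z]; exact hs
      rw [Finset.sum_sub_distrib] at h1
      rw [htdef]; linarith
    rcases eq_or_lt_of_le ht0 with ht | ht
    · -- t = 0 : both parts vanish
      have hwp0 : ∀ z ∈ Finset.univ, wp z = 0 :=
        (Finset.sum_eq_zero_iff_of_nonneg fun z _ => hwp_nonneg z).mp ht.symm
      have hwm0 : ∀ z ∈ Finset.univ, wm z = 0 := by
        refine (Finset.sum_eq_zero_iff_of_nonneg fun z _ => hwm_nonneg z).mp ?_
        rw [hwm_sum, ← ht]
      funext z
      have := hdiff z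
      rw [hwp0 z (Finset.mem_univ z), hwm0 z (Finset.mem_univ z)] at this
      simpa using this.symm
    · -- t > 0 : wp/t and wm/t are both stationary distributions, hence equal
      have htne : t ≠ 0 := ne_of_gt ht
      have hp_eq : (fun z => wp z / t) = π := by
        refine hπ_unique _ (fun z => div_nonneg (hwp_nonneg z) ht0) ?_ ?_
        · rw [← Finset.sum_div, ← htdef, div_self htne]
        · intro y'
          have : ∑ z, wp z / t * K z y' = (∑ z, wp z * K z y') / t := by
            rw [Finset.sum_div]
            exact Finset.sum_congr rfl fun z _ => by ring
          rw [this, hwpK y', zero_div]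
      have hm_eq : (fun z => wm z / t) = π := by
        refine hπ_unique _ (fun z => div_nonneg (hwm_nonneg z) ht0) ?_ ?_
        · rw [← Finset.sum_div, hwm_sum, div_self htne]
        · intro y'
          have : ∑ z, wm z / t * K z y' = (∑ z, wm z * K z y') / t := by
            rw [Finset.sum_div]
            exact Finset.sum_congr rfl fun z _ => by ring
          rw [this, hwmK y', zero_div]
      funext z
      have h1 : wp z / t = π z := congr_fun hp_eq z
      have h2 : wm z / t = π z := congr_fun hm_eq z
      have h3 : wp z = wm z := by
        field_simp at h1 h2; linarith
      have := hdiff z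
      rw [h3, sub_self] at this
      simpa using this.symm
  -- A is a unit
  have hAunit : IsUnit A := by
    rw [← Matrix.vecMul_injective_iff_isUnit]
    intro u v huv
    simp only [Matrix.vecMul] at huv
    have h0 : (u - v) ᵥ* A = 0 := by
      rw [Matrix.sub_vecMul]
      simp only [Matrix.vecMul, huv, sub_self]
    have huv0 : u - v = 0 := by
      refine hker (u - v) fun y' => ?_
      have := congr_fun h0 y'
      simpa [Matrix.vecMul, dotProduct] using this
    exact sub_eq_zero.mp huv0
  refine ⟨hAunit, ?_⟩
  -- matrix algebra
  have hdet : IsUnit A.det := (Matrix.isUnit_iff_isUnit_det A).mp hAunit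
  have hinv1 : A * A⁻¹ = 1 := Matrix.mul_nonsing_inv A hdet
  have hPiK : Pi * K = 0 := by
    ext x y'
    simp only [Pi, Matrix.mul_apply, Matrix.of_apply, Matrix.zero_apply]
    exact hπ_stat y'
  have hPiPi : Pi * Pi = Pi := by
    ext x y'
    simp only [Pi, Matrix.mul_apply, Matrix.of_apply]
    rw [← Finset.sum_mul, hπ_sum, one_mul]
  have hPiA : Pi * A = Pi := by
    rw [hAdef, Matrix.mul_add, hPiK, hPiPi, zero_add]
  have hPiInv : Pi * A⁻¹ = Pi := by
    calc Pi * A⁻¹ = (Pi * A) * A⁻¹ := by rw [hPiA]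
      _ = Pi * (A * A⁻¹) := by rw [Matrix.mul_assoc]
      _ = Pi := by rw [hinv1, Matrix.mul_one]
  have hKA : K * A⁻¹ = 1 - Pi := by
    have hK : K = A - Pi := by rw [hAdef, add_sub_cancel_right]
    rw [hK, Matrix.sub_mul, hinv1, hPiInv]
  rw [hKA, Matrix.sub_mul, Matrix.one_mul, hPiK, sub_zero]
end

section
/- Let K be a real m×m matrix whose rows sum to zero, let π be a row vector with entries summing to one satisfying πK = 0, set Π := 𝟙 πᵀ, and assume K + Π is invertible. Then K (K + Π)⁻¹ = I − Π and Π (K + Π)⁻¹ = Π; consequently, with K⁺ := (K + Π)⁻¹ (I − Π), one has K K⁺ = I − Π. -/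
open Matrix BigOperators

/-- Let `K` be a real `m × m` matrix whose rows sum to zero, let `π` be a
row vector with entries summing to one satisfying `π K = 0`, set `Π := 𝟙 πᵀ`, and assume
`K + Π` is invertible.  Then `K (K + Π)⁻¹ = I − Π` and `Π (K + Π)⁻¹ = Π`; consequently,
with `K⁺ := (K + Π)⁻¹ (I − Π)`, one has `K K⁺ = I − Π`. -/
theorem kernel_pseudo_inverse_identities {m : ℕ}
    (K : Matrix (Fin m) (Fin m) ℝ)
    (hrow : ∀ y : Fin m, ∑ y' : Fin m, K y y' = 0)
    (π : Fin m → ℝ)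
    (hπ_sum : ∑ y, π y = 1)
    (hπ_stat : ∀ y' : Fin m, ∑ y, π y * K y y' = 0)
    (Pi : Matrix (Fin m) (Fin m) ℝ) (hPi : Pi = Matrix.of fun _ y' : Fin m => π y')
    (hunit : IsUnit (K + Pi)) :
    K * (K + Pi)⁻¹ = 1 - Pi ∧ Pi * (K + Pi)⁻¹ = Pi ∧
      K * ((K + Pi)⁻¹ * (1 - Pi)) = 1 - Pi := by
  have hPiK : Pi * K = 0 := by
    subst hPi
    ext x y
    simp [Matrix.mul_apply, hπ_stat y]
  have hPiPi : Pi * Pi = Pi := by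
    subst hPi
    ext x y
    simp [Matrix.mul_apply, ← Finset.sum_mul, hπ_sum]
  have hKPi : K * Pi = 0 := by
    subst hPi
    ext x y
    simp [Matrix.mul_apply, ← Finset.sum_mul, hrow x]
  have h2 : Pi * (K + Pi)⁻¹ = Pi := by
    have := congrArg (· * (K + Pi)⁻¹) (show Pi * (K + Pi) = Pi by
      rw [Matrix.mul_add, hPiK, hPiPi, zero_add])
    simpa [Matrix.mul_assoc, Matrix.mul_nonsing_inv _ ((Matrix.isUnit_iff_isUnit_det _).mp hunit)] using this.symm
  have h1 : K * (K + Pi)⁻¹ = 1 - Pi := by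
    have : (K + Pi) * (K + Pi)⁻¹ = 1 :=
      Matrix.mul_nonsing_inv _ ((Matrix.isUnit_iff_isUnit_det _).mp hunit)
    rw [Matrix.add_mul, h2] at this
    linear_combination (norm := abel) this
  refine ⟨h1, h2, ?_⟩
  rw [← Matrix.mul_assoc, h1, Matrix.sub_mul, Matrix.mul_sub, Matrix.mul_sub,
    Matrix.one_mul, Matrix.mul_one, Matrix.one_mul, hPiPi, sub_self, sub_zero]
end

section
/- Let K be a real m×m matrix whose rows sum to zero, let π be a row vector with entries summing to one satisfying πK = 0, set Π := 𝟙 πᵀ, assume K + Π is invertible, and set K⁺ := (K + Π)⁻¹ (I − Π). Then for every function h : {1,…,m} → ℝⁿ, the function G_h(y) := Σ_{y'} K⁺_{y,y'} h(y') solves the Poisson equation Σ_{y'} K_{y,y'} G_h(y') = h(y) − Σ_{y'} π_{y'} h(y') for all y ∈ {1,…,m}. -/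
open Matrix BigOperators

/-- With `K` a real `m × m` matrix whose rows sum to zero, `π` a row
vector summing to one with `π K = 0`, `Π := 𝟙 πᵀ`, `K + Π` invertible and
`K⁺ := (K + Π)⁻¹ (I − Π)`, for every `h : Fin m → ℝⁿ` the function
`G_h(y) := Σ_{y'} K⁺_{y,y'} h(y')` solves the Poisson equation
`Σ_{y'} K_{y,y'} G_h(y') = h(y) − Σ_{y'} π_{y'} h(y')`. -/
theorem pseudo_inverse_solves_poisson {m n : ℕ}
    (K : Matrix (Fin m) (Fin m) ℝ)
    (hrow : ∀ y : Fin m, ∑ y' : Fin m, K y y' = 0)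
    (π : Fin m → ℝ)
    (hπ_sum : ∑ y, π y = 1)
    (hπ_stat : ∀ y' : Fin m, ∑ y, π y * K y y' = 0)
    (Pi : Matrix (Fin m) (Fin m) ℝ) (hPi : Pi = Matrix.of fun _ y' : Fin m => π y')
    (hunit : IsUnit (K + Pi))
    (Kplus : Matrix (Fin m) (Fin m) ℝ) (hKplus : Kplus = (K + Pi)⁻¹ * (1 - Pi))
    (h : Fin m → (Fin n → ℝ))
    (G : Fin m → (Fin n → ℝ)) (hG : ∀ y, G y = ∑ y' : Fin m, Kplus y y' • h y') :
    ∀ y : Fin m, ∑ y' : Fin m, K y y' • G y' = h y - ∑ y' : Fin m, π y' • h y' := by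
  have hdet : IsUnit (K + Pi).det := (Matrix.isUnit_iff_isUnit_det _).mp hunit
  have hinv : (K + Pi) * (K + Pi)⁻¹ = 1 := Matrix.mul_nonsing_inv _ hdet
  have hPiPi : Pi * Pi = Pi := by
    subst hPi
    ext y y'
    simp only [Matrix.mul_apply, Matrix.of_apply]
    rw [← Finset.sum_mul, hπ_sum, one_mul]
  have hPiK : Pi * K = 0 := by
    subst hPi
    ext y y'
    simpa [Matrix.mul_apply] using hπ_stat y'
  have hPiKPi : Pi * (K + Pi) = Pi := by
    rw [Matrix.mul_add, hPiK, hPiPi, zero_add]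
  have hPiInv : Pi * (K + Pi)⁻¹ = Pi := by
    calc Pi * (K + Pi)⁻¹ = (Pi * (K + Pi)) * (K + Pi)⁻¹ := by rw [hPiKPi]
    _ = Pi * ((K + Pi) * (K + Pi)⁻¹) := by rw [Matrix.mul_assoc]
    _ = Pi := by rw [hinv, Matrix.mul_one]
  have hPiKplus : Pi * Kplus = 0 := by
    rw [hKplus, ← Matrix.mul_assoc, hPiInv, Matrix.mul_sub, Matrix.mul_one, hPiPi, sub_self]
  have hKPiKplus : (K + Pi) * Kplus = 1 - Pi := by
    rw [hKplus, ← Matrix.mul_assoc, hinv, Matrix.one_mul]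
  have hKKplus : K * Kplus = 1 - Pi := by
    have : (K + Pi) * Kplus = K * Kplus + Pi * Kplus := Matrix.add_mul _ _ _
    rw [hKPiKplus, hPiKplus, add_zero] at this
    exact this.symm
  intro y
  have key : ∀ z : Fin m, (K * Kplus) y z = (1 : Matrix (Fin m) (Fin m) ℝ) y z - Pi y z := by
    intro z
    rw [hKKplus]; simp [Matrix.sub_apply]
  calc ∑ y' : Fin m, K y y' • G y'
      = ∑ y' : Fin m, ∑ z : Fin m, (K y y' * Kplus y' z) • h z := by
        refine Finset.sum_congr rfl fun y' _ => ?_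
        rw [hG, Finset.smul_sum]
        exact Finset.sum_congr rfl fun z _ => smul_smul _ _ _
    _ = ∑ z : Fin m, (∑ y' : Fin m, K y y' * Kplus y' z) • h z := by
        rw [Finset.sum_comm]
        exact Finset.sum_congr rfl fun z _ => (Finset.sum_smul).symm
    _ = ∑ z : Fin m, ((1 : Matrix (Fin m) (Fin m) ℝ) y z - Pi y z) • h z := by
        refine Finset.sum_congr rfl fun z _ => ?_
        rw [← Matrix.mul_apply, key]
    _ = h y - ∑ z : Fin m, π z • h z := by
        subst hPi
        simp [sub_smul, Finset.sum_sub_distrib, Matrix.one_apply]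
end

section
/- Let U ⊆ ℝ^d be open and let K : U → ℝ^{m×m} be a matrix-valued map whose entries are k-times continuously differentiable (k ≥ 1), such that for every x ∈ U, K(x) is a transition rate matrix with a unique stationary distribution π(x). Then the map x ↦ π(x) is k-times continuously differentiable on U, and consequently the map x ↦ K⁺(x) := (K(x) + Π(x))⁻¹ (I − Π(x)), with Π(x) := 𝟙 π(x)ᵀ, is k-times continuously differentiable on U. -/
open Matrix BigOperators

private lemma contDiffOn_matrix_det {d m : ℕ} {k : ℕ∞} {U : Set (Fin d → ℝ)}
    (M : (Fin d → ℝ) → Matrix (Fin m) (Fin m) ℝ)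
    (hM : ∀ i j, ContDiffOn ℝ k (fun x => M x i j) U) :
    ContDiffOn ℝ k (fun x => (M x).det) U := by
  simp only [Matrix.det_apply']
  apply ContDiffOn.sum
  intro σ _
  exact ContDiffOn.mul contDiffOn_const (contDiffOn_prod fun i _ => hM (σ i) i)

private lemma contDiffOn_matrix_inv {d m : ℕ} {k : ℕ∞} {U : Set (Fin d → ℝ)}
    (M : (Fin d → ℝ) → Matrix (Fin m) (Fin m) ℝ)
    (hM : ∀ i j, ContDiffOn ℝ k (fun x => M x i j) U)
    (hdet : ∀ x ∈ U, (M x).det ≠ 0) (i j : Fin m) :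
    ContDiffOn ℝ k (fun x => (M x)⁻¹ i j) U := by
  have : ∀ x, (M x)⁻¹ i j = ((M x).det)⁻¹ * (M x).adjugate i j := by
    intro x
    rw [Matrix.inv_def]
    simp [Ring.inverse_eq_inv']
  simp only [this]
  apply ContDiffOn.mul
  · exact (contDiffOn_matrix_det M hM).inv hdet
  · simp only [Matrix.adjugate_apply]
    apply contDiffOn_matrix_det
    intro i' j'
    by_cases h : i' = j <;> simp [Matrix.updateRow_apply, h]
    · exact contDiffOn_const
    · exact hM i' j'

private lemma kernel_triv {m : ℕ} (K : Matrix (Fin m) (Fin m) ℝ)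
    (hoff : ∀ y y' : Fin m, y ≠ y' → 0 ≤ K y y')
    (hrow : ∀ y : Fin m, ∑ y' : Fin m, K y y' = 0)
    (π : Fin m → ℝ)
    (hπ_unique : ∀ π' : Fin m → ℝ,
      (∀ y, 0 ≤ π' y) → (∑ y, π' y = 1) → (∀ y' : Fin m, ∑ y, π' y * K y y' = 0) →
      π' = π)
    (v : Fin m → ℝ) (hv : ∀ j, ∑ i, v i * K i j = 0) (hsum : ∑ i, v i = 0) :
    v = 0 := by
  have hdiag : ∀ j, K j j ≤ 0 := by
    intro j
    have h := hrow j
    rw [← Finset.add_sum_erase _ _ (Finset.mem_univ j)] at h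
    have : 0 ≤ ∑ y' ∈ Finset.univ.erase j, K j y' :=
      Finset.sum_nonneg fun i hi => hoff j i (Ne.symm (Finset.ne_of_mem_erase hi))
    linarith
  set w : Fin m → ℝ := fun i => |v i| with hw
  -- each column sum with w is nonnegative
  have hnn : ∀ j, 0 ≤ ∑ i, w i * K i j := by
    intro j
    have hsplit : ∑ i, w i * K i j
        = (∑ i ∈ Finset.univ.erase j, w i * K i j) + w j * K j j := by
      rw [← Finset.add_sum_erase _ _ (Finset.mem_univ j)]; ring
    have htri : |∑ i ∈ Finset.univ.erase j, v i * K i j|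
        ≤ ∑ i ∈ Finset.univ.erase j, w i * K i j := by
      refine (Finset.abs_sum_le_sum_abs _ _).trans ?_
      apply Finset.sum_le_sum
      intro i hi
      rw [abs_mul, abs_of_nonneg (hoff i j (Finset.ne_of_mem_erase hi))]
    have hvj : ∑ i ∈ Finset.univ.erase j, v i * K i j = -(v j * K j j) := by
      have h := hv j
      rw [← Finset.add_sum_erase _ _ (Finset.mem_univ j)] at h
      linarith
    rw [hvj, abs_neg, abs_mul, abs_of_nonpos (hdiag j)] at htri
    rw [hsplit]
    nlinarith [abs_nonneg (v j), neg_abs_le (v j), le_abs_self (v j)]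
  -- total sum is zero, so each column sum is zero
  have htot : ∑ j, ∑ i, w i * K i j = 0 := by
    rw [Finset.sum_comm]
    simp only [← Finset.mul_sum]
    simp [hrow]
  have hwK : ∀ j, ∑ i, w i * K i j = 0 := by
    intro j
    have := (Finset.sum_eq_zero_iff_of_nonneg (fun j _ => hnn j)).mp htot
    exact this j (Finset.mem_univ j)
  set s : ℝ := ∑ i, w i with hs
  by_cases hs0 : s = 0
  · funext i
    have : w i = 0 := by
      have := (Finset.sum_eq_zero_iff_of_nonneg (fun i _ => abs_nonneg (v i))).mp hs0
      exact this i (Finset.mem_univ i)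
    simpa [hw, abs_eq_zero] using this
  · have hspos : 0 < s := lt_of_le_of_ne (Finset.sum_nonneg fun i _ => abs_nonneg (v i)) (Ne.symm hs0)
    have hp : ∀ (ε : ℝ), ε = 1 ∨ ε = -1 → (fun i => (w i + ε * v i) / s) = π := by
      intro ε hε
      apply hπ_unique
      · intro i
        apply div_nonneg _ hspos.le
        rcases hε with h | h <;> subst h
        · nlinarith [neg_abs_le (v i)]
        · nlinarith [le_abs_self (v i)]
      · rw [← Finset.sum_div]
        rw [Finset.sum_add_distrib, ← Finset.mul_sum, hsum]
        field_simp
        simp [hs]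
      · intro j
        simp only [div_mul_eq_mul_div, ← Finset.sum_div]
        have : ∑ i, (w i + ε * v i) * K i j
            = (∑ i, w i * K i j) + ε * ∑ i, v i * K i j := by
          rw [Finset.mul_sum, ← Finset.sum_add_distrib]; congr 1; funext i; ring
        rw [this, hwK j, hv j]
        simp
    have h1 := hp 1 (Or.inl rfl)
    have h2 := hp (-1) (Or.inr rfl)
    funext i
    have e1 : (w i + 1 * v i) / s = π i := congrFun h1 i
    have e2 : (w i + (-1) * v i) / s = π i := congrFun h2 i
    have hvi : v i / s = 0 := by
      have h := e1.trans e2.symm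
      field_simp at h ⊢
      linarith
    show v i = 0
    exact (div_eq_zero_iff.mp hvi).resolve_right hs0

/-- Let `U ⊆ ℝ^d` be open and `K : U → ℝ^{m×m}` a matrix-valued map with
`C^k` entries (`k ≥ 1`) such that for every `x ∈ U`, `K x` is a transition rate matrix with
a unique stationary distribution `π x`.  Then `x ↦ π x` is `C^k` on `U`, and consequently
`x ↦ K⁺ x := (K x + Π x)⁻¹ (I − Π x)` (with `Π x := 𝟙 (π x)ᵀ`) is `C^k` on `U`. -/
theorem stationary_distribution_smooth {d m : ℕ} (k : ℕ) (hk : 1 ≤ k)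
    (U : Set (Fin d → ℝ)) (hU : IsOpen U)
    (K : (Fin d → ℝ) → Matrix (Fin m) (Fin m) ℝ)
    (hKsmooth : ∀ i j : Fin m, ContDiffOn ℝ (k : ℕ∞) (fun x => K x i j) U)
    (hoff : ∀ x ∈ U, ∀ y y' : Fin m, y ≠ y' → 0 ≤ K x y y')
    (hrow : ∀ x ∈ U, ∀ y : Fin m, ∑ y' : Fin m, K x y y' = 0)
    (π : (Fin d → ℝ) → Fin m → ℝ)
    (hπ_nonneg : ∀ x ∈ U, ∀ y, 0 ≤ π x y)
    (hπ_sum : ∀ x ∈ U, ∑ y, π x y = 1)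
    (hπ_stat : ∀ x ∈ U, ∀ y' : Fin m, ∑ y, π x y * K x y y' = 0)
    (hπ_unique : ∀ x ∈ U, ∀ π' : Fin m → ℝ,
      (∀ y, 0 ≤ π' y) → (∑ y, π' y = 1) → (∀ y' : Fin m, ∑ y, π' y * K x y y' = 0) →
      π' = π x) :
    (∀ y : Fin m, ContDiffOn ℝ (k : ℕ∞) (fun x => π x y) U) ∧
      (∀ y y' : Fin m, ContDiffOn ℝ (k : ℕ∞)
        (fun x =>
          ((K x + Matrix.of fun _ j : Fin m => π x j)⁻¹ *
            (1 - Matrix.of fun _ j : Fin m => π x j)) y y') U) := by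
  -- m is positive wherever U is inhabited
  have hmpos : ∀ x ∈ U, 0 < m := by
    intro x hx
    by_contra h
    push_neg at h
    interval_cases m
    simpa using hπ_sum x hx
  -- trivial kernel
  have hker : ∀ x ∈ U, ∀ v : Fin m → ℝ,
      (∀ j, ∑ i, v i * K x i j = 0) → (∑ i, v i = 0) → v = 0 := by
    intro x hx v hv hsum
    exact kernel_triv (K x) (hoff x hx) (hrow x hx) (π x) (hπ_unique x hx) v hv hsum
  -- the all-ones shifted matrix
  set J : Matrix (Fin m) (Fin m) ℝ := Matrix.of fun _ _ => (1 : ℝ) with hJ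
  have hMdet : ∀ x ∈ U, (K x + J).det ≠ 0 := by
    intro x hx h
    obtain ⟨v, hv0, hv⟩ := Matrix.exists_vecMul_eq_zero_iff.mpr h
    have hvj : ∀ j, (∑ i, v i * K x i j) + (∑ i, v i) = 0 := by
      intro j
      have := congrFun hv j
      simp only [Matrix.vecMul, dotProduct, Matrix.add_apply, hJ, Matrix.of_apply,
        Pi.zero_apply] at this
      rw [← this, ← Finset.sum_add_distrib]
      congr 1; funext i; ring
    have hsumv : ∑ i, v i = 0 := by
      have htot : ∑ j : Fin m, ((∑ i, v i * K x i j) + (∑ i, v i)) = 0 := by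
        simp [hvj]
      rw [Finset.sum_add_distrib, Finset.sum_const, Finset.sum_comm] at htot
      simp only [← Finset.mul_sum] at htot
      simp only [hrow x hx, mul_zero, Finset.sum_const_zero, zero_add, Finset.card_univ,
        Fintype.card_fin, nsmul_eq_mul] at htot
      have hm : (0:ℝ) < m := by exact_mod_cast hmpos x hx
      have := mul_eq_zero.mp htot
      rcases this with h' | h'
      · exact absurd h' (ne_of_gt hm)
      · exact h'
    have hvK : ∀ j, ∑ i, v i * K x i j = 0 := by
      intro j; have := hvj j; rw [hsumv] at this; linarith
    exact hv0 (hker x hx v hvK hsumv)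
  -- the explicit formula for π on U
  have hπ_eq : ∀ x ∈ U, ∀ y, π x y = ∑ i, (K x + J)⁻¹ i y := by
    intro x hx y
    have hstat : π x ᵥ* (K x + J) = fun _ => 1 := by
      funext j
      simp only [Matrix.vecMul, dotProduct, Matrix.add_apply, hJ, Matrix.of_apply]
      have : ∑ i, π x i * (K x i j + 1) = (∑ i, π x i * K x i j) + ∑ i, π x i := by
        rw [← Finset.sum_add_distrib]; congr 1; funext i; ring
      rw [this, hπ_stat x hx j, hπ_sum x hx]; ring
    have hinv : π x = (fun _ : Fin m => (1:ℝ)) ᵥ* (K x + J)⁻¹ := by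
      conv_rhs => rw [← hstat]
      rw [Matrix.vecMul_vecMul, Matrix.mul_nonsing_inv _ (isUnit_iff_ne_zero.mpr (hMdet x hx)),
        Matrix.vecMul_one]
    rw [hinv]
    simp [Matrix.vecMul, dotProduct]
  -- smoothness of π
  have hMsmooth : ∀ i j : Fin m, ContDiffOn ℝ (k : ℕ∞) (fun x => (K x + J) i j) U := by
    intro i j
    simp only [Matrix.add_apply, hJ, Matrix.of_apply]
    exact (hKsmooth i j).add contDiffOn_const
  have hfirst : ∀ y : Fin m, ContDiffOn ℝ (k : ℕ∞) (fun x => π x y) U := by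
    intro y
    apply ContDiffOn.congr (f := fun x => ∑ i, (K x + J)⁻¹ i y)
    · exact ContDiffOn.sum fun i _ =>
        contDiffOn_matrix_inv (fun x => K x + J) hMsmooth hMdet i y
    · intro x hx; exact hπ_eq x hx y
  refine ⟨hfirst, ?_⟩
  -- second part
  intro y y'
  set N : (Fin d → ℝ) → Matrix (Fin m) (Fin m) ℝ :=
    fun x => K x + Matrix.of fun _ j : Fin m => π x j with hN
  have hNsmooth : ∀ i j : Fin m, ContDiffOn ℝ (k : ℕ∞) (fun x => N x i j) U := by
    intro i j
    simp only [hN, Matrix.add_apply, Matrix.of_apply]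
    exact (hKsmooth i j).add (hfirst j)
  have hNdet : ∀ x ∈ U, (N x).det ≠ 0 := by
    intro x hx h
    obtain ⟨v, hv0, hv⟩ := Matrix.exists_vecMul_eq_zero_iff.mpr h
    have hvj : ∀ j, (∑ i, v i * K x i j) + (∑ i, v i) * π x j = 0 := by
      intro j
      have := congrFun hv j
      simp only [hN, Matrix.vecMul, dotProduct, Matrix.add_apply, Matrix.of_apply,
        Pi.zero_apply] at this
      rw [← this, Finset.sum_mul, ← Finset.sum_add_distrib]
      congr 1; funext i; ring
    have hsumv : ∑ i, v i = 0 := by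
      have htot : ∑ j : Fin m, ((∑ i, v i * K x i j) + (∑ i, v i) * π x j) = 0 := by
        simp [hvj]
      rw [Finset.sum_add_distrib, Finset.sum_comm, ← Finset.mul_sum] at htot
      simp only [← Finset.mul_sum] at htot
      simp only [hrow x hx, mul_zero, Finset.sum_const_zero, zero_add, hπ_sum x hx,
        mul_one] at htot
      exact htot
    have hvK : ∀ j, ∑ i, v i * K x i j = 0 := by
      intro j; have := hvj j; rw [hsumv] at this; simpa using this
    exact hv0 (hker x hx v hvK hsumv)
  have hinv_smooth : ∀ i j : Fin m, ContDiffOn ℝ (k : ℕ∞) (fun x => (N x)⁻¹ i j) U :=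
    fun i j => contDiffOn_matrix_inv N hNsmooth hNdet i j
  simp only [Matrix.mul_apply]
  apply ContDiffOn.sum
  intro j _
  apply ContDiffOn.mul (hinv_smooth y j)
  simp only [Matrix.sub_apply, Matrix.of_apply]
  exact ContDiffOn.sub contDiffOn_const (hfirst y')
end

section
/- If A is a Hurwitz real n×n matrix, then A is invertible, the map t ↦ exp(tA) is integrable on [0,∞), and ∫₀^∞ exp(tA) dt = −A⁻¹. -/
/-!
Over `ℂ` every vector is a sum of generalized eigenvectors of `B = A.map ofReal`, and on a
generalized eigenvector for `μ` the flow `exp (t B)` is `e^{tμ}` times a polynomial in `t`.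
Since every eigenvalue satisfies `Re μ < -δ` for some `δ > 0`, this gives
`‖exp (t A)‖ = O(e^{-δ t})`, so `t ↦ exp (t A)` is integrable on `[0, ∞)` and tends to `0`.
As `d/dt exp (t A) = exp (t A) A`, the fundamental theorem of calculus yields
`(∫₀^∞ exp (t A) dt) A = -1`; and `A` is invertible because `0` is not an eigenvalue.
-/

open MeasureTheory Matrix

open NormedSpace Filter Asymptotics Topology

theorem Real.isBigO_pow_mul_exp_of_lt {a b : ℝ} (hab : a < b) (j : ℕ) :
    (fun t : ℝ => t ^ j * Real.exp (a * t)) =O[atTop] fun t => Real.exp (b * t) := by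
  have h := (isLittleO_pow_exp_pos_mul_atTop j (sub_pos.mpr hab)).isBigO.mul
    (isBigO_refl (fun t => Real.exp (a * t)) atTop)
  refine h.congr_right fun t => ?_
  rw [← Real.exp_add, sub_mul, sub_add_cancel]

theorem Complex.exists_pos_forall_re_lt_neg {S : Set ℂ} (hS : S.Finite)
    (h : ∀ μ ∈ S, μ.re < 0) : ∃ δ > 0, ∀ μ ∈ S, μ.re < -δ := by
  have hsmall : ∀ᶠ δ in 𝓝 (0 : ℝ), ∀ μ ∈ S, μ.re < -δ :=
    hS.eventually_all.mpr fun μ hμ =>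
      (continuous_neg.tendsto' 0 0 neg_zero).eventually (lt_mem_nhds (h μ hμ))
  obtain ⟨δ, hre, hδ⟩ :=
    ((hsmall.filter_mono nhdsWithin_le_nhds).and (self_mem_nhdsWithin (s := Set.Ioi 0))).exists
  exact ⟨δ, hδ, hre⟩

theorem integrableOn_Ici_of_isBigO_exp_neg {E : Type*} [NormedAddCommGroup E] {f : ℝ → E}
    {a δ : ℝ} (hδ : 0 < δ) (hf : ContinuousOn f (Set.Ici a))
    (ho : f =O[atTop] fun t => Real.exp (-δ * t)) : IntegrableOn f (Set.Ici a) :=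
  (hf.locallyIntegrableOn measurableSet_Ici).integrableOn_of_isBigO_atTop ho
    ⟨Set.Ioi δ, Ioi_mem_atTop δ, exp_neg_integrableOn_Ioi δ hδ⟩

theorem tendsto_zero_of_isBigO_exp_neg {E : Type*} [NormedAddCommGroup E] {f : ℝ → E} {δ : ℝ}
    (hδ : 0 < δ) (ho : f =O[atTop] fun t => Real.exp (-δ * t)) : Tendsto f atTop (𝓝 0) :=
  ho.trans_tendsto <| by
    simpa only [neg_mul, Function.comp_def, id] using
      Real.tendsto_exp_neg_atTop_nhds_zero.comp (tendsto_id.const_mul_atTop hδ)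

namespace Matrix

variable {ι : Type*} [Fintype ι] [DecidableEq ι]

theorem exp_eq_exp_smul_exp_sub_smul_one (B : Matrix ι ι ℂ) (μ : ℂ) :
    exp B = exp μ • exp (B - μ • 1) := by
  have hscalar : exp (μ • 1 : Matrix ι ι ℂ) = exp μ • 1 := by
    rw [smul_one_eq_diagonal, exp_diagonal, smul_one_eq_diagonal, Pi.exp_def]
  conv_lhs => rw [← add_sub_cancel (μ • 1) B]
  rw [Matrix.exp_add_of_commute _ _ ((Commute.one_left _).smul_left μ), hscalar, smul_one_mul]

theorem exp_mulVec_of_pow_mulVec_eq_zero {M : Matrix ι ι ℂ} {v : ι → ℂ} {k : ℕ}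
    (hv : M ^ k *ᵥ v = 0) :
    exp M *ᵥ v = ∑ j ∈ Finset.range k, (j.factorial⁻¹ : ℝ) • (M ^ j *ᵥ v) := by
  let : NormedRing (Matrix ι ι ℂ) := Matrix.linftyOpNormedRing
  let : NormedAlgebra ℝ (Matrix ι ι ℂ) := Matrix.linftyOpNormedAlgebra
  have hseries : HasSum (fun j => ((j.factorial⁻¹ : ℝ) • M ^ j) *ᵥ v) (exp M *ᵥ v) :=
    (exp_series_hasSum_exp' (𝕂 := ℝ) M).map (mulVec.addMonoidHomLeft v)
      (continuous_id.matrix_mulVec continuous_const)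
  simp only [smul_mulVec] at hseries
  refine hseries.unique (hasSum_sum_of_ne_finset_zero fun j hj => ?_)
  obtain ⟨i, rfl⟩ := Nat.exists_eq_add_of_le (not_lt.mp (Finset.mem_range.not.mp hj))
  rw [add_comm, pow_add, ← mulVec_mulVec, hv, mulVec_zero, smul_zero]

theorem exp_smul_mulVec_eq_sum {B : Matrix ι ι ℂ} {μ : ℂ} {v : ι → ℂ} {k : ℕ}
    (hv : (B - μ • 1) ^ k *ᵥ v = 0) (t : ℝ) :
    exp ((t : ℂ) • B) *ᵥ v = ∑ j ∈ Finset.range k,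
      (Complex.exp (t * μ) * (t : ℂ) ^ j) • ((j.factorial⁻¹ : ℝ) • ((B - μ • 1) ^ j *ᵥ v)) := by
  have hshift : (t : ℂ) • B - (t * μ) • 1 = (t : ℂ) • (B - μ • 1) := by
    rw [smul_sub, mul_smul]
  have hv' : ((t : ℂ) • (B - μ • 1)) ^ k *ᵥ v = 0 := by
    rw [smul_pow, smul_mulVec, hv, smul_zero]
  rw [exp_eq_exp_smul_exp_sub_smul_one _ (t * μ), hshift, smul_mulVec,
    exp_mulVec_of_pow_mulVec_eq_zero hv', Finset.smul_sum, ← Complex.exp_eq_exp_ℂ]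
  refine Finset.sum_congr rfl fun j _ => ?_
  rw [smul_pow, smul_mulVec, smul_comm _ ((t : ℂ) ^ j), smul_smul]

theorem isBigO_exp_smul_mulVec_of_pow_mulVec_eq_zero {B : Matrix ι ι ℂ} {μ : ℂ} {δ : ℝ}
    (hμ : μ.re < -δ) {v : ι → ℂ} {k : ℕ} (hv : (B - μ • 1) ^ k *ᵥ v = 0) :
    (fun t : ℝ => exp ((t : ℂ) • B) *ᵥ v) =O[atTop] fun t => Real.exp (-δ * t) := by
  simp_rw [exp_smul_mulVec_eq_sum hv]
  refine IsBigO.fun_sum fun j _ => ?_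
  refine (isBigO_of_le' (c := ‖(j.factorial⁻¹ : ℝ) • ((B - μ • 1) ^ j *ᵥ v)‖)
    (g := fun t : ℝ => t ^ j * Real.exp (μ.re * t)) atTop fun t => ?_).trans
    (Real.isBigO_pow_mul_exp_of_lt hμ j)
  rw [norm_smul, mul_comm, norm_mul, Complex.norm_exp, norm_pow, Complex.norm_real,
    Complex.re_ofReal_mul, norm_mul, norm_pow, Real.norm_of_nonneg (Real.exp_pos _).le,
    mul_comm t, mul_comm (‖t‖ ^ j)]

theorem isBigO_exp_smul_mulVec {B : Matrix ι ι ℂ} {δ : ℝ} (hB : ∀ μ ∈ spectrum ℂ B, μ.re < -δ)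
    (v : ι → ℂ) :
    (fun t : ℝ => exp ((t : ℂ) • B) *ᵥ v) =O[atTop] fun t => Real.exp (-δ * t) := by
  set f : Module.End ℂ (ι → ℂ) := toLinAlgEquiv' B
  have hv : v ∈ ⨆ μ, f.maxGenEigenspace μ := by
    rw [Module.End.iSup_maxGenEigenspace_eq_top]; trivial
  induction hv using Submodule.iSup_induction' with
  | mem μ w hw =>
    rcases eq_or_ne w 0 with rfl | hw0
    · simpa only [mulVec_zero] using isBigO_zero _ _
    have hμ : μ ∈ spectrum ℂ B := by
      rw [← AlgEquiv.spectrum_eq toLinAlgEquiv', ← Module.End.hasUnifEigenvalue_iff_mem_spectrum,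
        ← Module.End.hasUnifEigenvalue_iff_hasUnifEigenvalue_one (k := ⊤) (by simp)]
      exact (Submodule.ne_bot_iff _).mpr ⟨w, hw, hw0⟩
    obtain ⟨k, hk⟩ := (Module.End.mem_maxGenEigenspace f μ w).mp hw
    refine isBigO_exp_smul_mulVec_of_pow_mulVec_eq_zero (hB μ hμ) (k := k) ?_
    rwa [← map_one toLinAlgEquiv', ← map_smul, ← map_sub, ← map_pow, toLinAlgEquiv'_apply] at hk
  | zero => simpa only [mulVec_zero] using isBigO_zero _ _
  | add w₁ w₂ _ _ h₁ h₂ => simpa only [mulVec_add] using h₁.add h₂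

theorem map_ofReal_exp_smul (A : Matrix ι ι ℝ) (t : ℝ) :
    (exp (t • A)).map Complex.ofReal = exp ((t : ℂ) • A.map Complex.ofReal) := by
  let : NormedRing (Matrix ι ι ℝ) := Matrix.linftyOpNormedRing
  let : NormedAlgebra ℝ (Matrix ι ι ℝ) := Matrix.linftyOpNormedAlgebra
  let : NormedAlgebra ℚ (Matrix ι ι ℝ) := Matrix.linftyOpNormedAlgebra
  let : NormedRing (Matrix ι ι ℂ) := Matrix.linftyOpNormedRing
  have h : (exp (t • A)).map Complex.ofReal = exp ((t • A).map Complex.ofReal) :=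
    map_exp Complex.ofRealHom.mapMatrix (continuous_id.matrix_map Complex.continuous_ofReal) _
  have hsmul : (t • A).map Complex.ofReal = (t : ℂ) • A.map Complex.ofReal := by
    ext i j
    simp
  rwa [hsmul] at h

theorem isUnit_of_forall_spectrum_map_ofReal_re_neg {A : Matrix ι ι ℝ}
    (hA : ∀ μ ∈ spectrum ℂ (A.map Complex.ofReal), μ.re < 0) : IsUnit A := by
  have hB : IsUnit (A.map Complex.ofReal) := (spectrum.zero_notMem_iff ℂ).mp fun h => by
    simpa using hA 0 h
  have hdet : ((A.det : ℝ) : ℂ) = (A.map Complex.ofReal).det :=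
    RingHom.map_det Complex.ofRealHom A
  rw [isUnit_iff_isUnit_det, isUnit_iff_ne_zero, ← hdet] at hB
  rw [isUnit_iff_isUnit_det, isUnit_iff_ne_zero]
  exact_mod_cast hB

/- The derivative is computed for the operator norm, under which matrices form a Banach algebra;
the slope characterisation transfers it to the entrywise norm, which induces the same topology. -/
theorem tendsto_slope_exp_smul (A : Matrix ι ι ℝ) (t : ℝ) :
    Tendsto (slope (fun u : ℝ => exp (u • A)) t) (𝓝[≠] t) (𝓝 (exp (t • A) * A)) := by
  let : NormedRing (Matrix ι ι ℝ) := Matrix.linftyOpNormedRing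
  let : NormedAlgebra ℝ (Matrix ι ι ℝ) := Matrix.linftyOpNormedAlgebra
  exact hasDerivAt_iff_tendsto_slope.mp (hasDerivAt_exp_smul_const A t)

end Matrix

attribute [local instance] Matrix.normedAddCommGroup Matrix.normedSpace

namespace Matrix

variable {ι : Type*} [Fintype ι] [DecidableEq ι]

theorem hasDerivAt_exp_smul_const (A : Matrix ι ι ℝ) (t : ℝ) :
    HasDerivAt (fun u : ℝ => exp (u • A)) (exp (t • A) * A) t :=
  hasDerivAt_iff_tendsto_slope.mpr (tendsto_slope_exp_smul A t)

theorem continuous_exp_smul (A : Matrix ι ι ℝ) : Continuous fun t : ℝ => exp (t • A) :=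
  continuous_iff_continuousAt.mpr fun t => (hasDerivAt_exp_smul_const A t).continuousAt

theorem isBigO_exp_smul {B : Matrix ι ι ℂ} {δ : ℝ} (hB : ∀ μ ∈ spectrum ℂ B, μ.re < -δ) :
    (fun t : ℝ => exp ((t : ℂ) • B)) =O[atTop] fun t => Real.exp (-δ * t) := by
  refine isBigO_pi.mpr fun i => isBigO_pi.mpr fun j => ?_
  simpa [mulVec_single_one] using isBigO_pi.mp (isBigO_exp_smul_mulVec hB (Pi.single j 1)) i

theorem isBigO_exp_smul_of_map_ofReal {A : Matrix ι ι ℝ} {δ : ℝ}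
    (hA : ∀ μ ∈ spectrum ℂ (A.map Complex.ofReal), μ.re < -δ) :
    (fun t : ℝ => exp (t • A)) =O[atTop] fun t => Real.exp (-δ * t) := by
  refine (isBigO_of_le _ fun t => ?_).trans (isBigO_exp_smul hA)
  rw [← map_ofReal_exp_smul, norm_map_eq _ _ Complex.norm_real]

theorem integral_exp_smul_mul_eq_neg_one {A : Matrix ι ι ℝ} {δ : ℝ} (hδ : 0 < δ)
    (hdecay : (fun t : ℝ => exp (t • A)) =O[atTop] fun t => Real.exp (-δ * t)) :
    (∫ t in Set.Ici (0 : ℝ), exp (t • A)) * A = -1 := by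
  let mulA : Matrix ι ι ℝ →L[ℝ] Matrix ι ι ℝ :=
    LinearMap.toContinuousLinearMap (LinearMap.mulRight ℝ A)
  have hint := (integrableOn_Ici_of_isBigO_exp_neg (a := 0) hδ
    (continuous_exp_smul A).continuousOn hdecay).mono_set Set.Ioi_subset_Ici_self
  calc (∫ t in Set.Ici (0 : ℝ), exp (t • A)) * A
      = ∫ t in Set.Ioi (0 : ℝ), exp (t • A) * A := by
        rw [integral_Ici_eq_integral_Ioi]
        exact (mulA.integral_comp_comm hint).symm
    _ = 0 - exp ((0 : ℝ) • A) :=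
        integral_Ioi_of_hasDerivAt_of_tendsto' (fun t _ => hasDerivAt_exp_smul_const A t)
          (mulA.integrable_comp hint) (tendsto_zero_of_isBigO_exp_neg hδ hdecay)
    _ = -1 := by rw [zero_smul, exp_zero, zero_sub]

end Matrix

/-- If `A` is a Hurwitz real `n × n` matrix (all complex eigenvalues have
strictly negative real part), then `A` is invertible, `t ↦ exp(tA)` is integrable on
`[0,∞)`, and `∫₀^∞ exp(tA) dt = −A⁻¹`. -/
theorem hurwitz_integral_exp {n : ℕ}
    (A : Matrix (Fin n) (Fin n) ℝ)
    (hA : ∀ μ ∈ spectrum ℂ (A.map (Complex.ofReal)), μ.re < 0) :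
    IsUnit A ∧
      @IntegrableOn ℝ _ _ _ NormedAddCommGroup.toENormedAddCommMonoid.toContinuousENorm
        (fun t : ℝ => NormedSpace.exp (t • A)) (Set.Ici 0) volume ∧
      ∫ t in Set.Ici (0 : ℝ), NormedSpace.exp (t • A) = -A⁻¹ := by
  have hunit := isUnit_of_forall_spectrum_map_ofReal_re_neg hA
  obtain ⟨δ, hδ, hδA⟩ := Complex.exists_pos_forall_re_lt_neg (finite_spectrum _) hA
  have hdecay := isBigO_exp_smul_of_map_ofReal hδA
  refine ⟨hunit,
    integrableOn_Ici_of_isBigO_exp_neg hδ (continuous_exp_smul A).continuousOn hdecay, ?_⟩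
  rw [← mul_nonsing_inv_cancel_right (A := A) (∫ t in Set.Ici (0 : ℝ), exp (t • A))
    ((isUnit_iff_isUnit_det A).mp hunit), integral_exp_smul_mul_eq_neg_one hδ hdecay, neg_one_mul]
end

section
/- Let A be a real n×n matrix and B a real p×p matrix such that no complex eigenvalue λ of A satisfies that −λ is an eigenvalue of B (i.e. the spectra of A and −B are disjoint). Then for every real n×p matrix C, the Sylvester equation A X + X B = C has a unique solution X ∈ ℝ^{n×p}; equivalently, the linear map X ↦ A X + X B on ℝ^{n×p} is bijective. -/
open Matrix Polynomial

lemma mem_spectrum_iff_eval_charpoly {m : ℕ} (M : Matrix (Fin m) (Fin m) ℂ) (μ : ℂ) :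
    μ ∈ spectrum ℂ M ↔ M.charpoly.eval μ = 0 := by
  have e : (algebraMap ℂ (Matrix (Fin m) (Fin m) ℂ)) μ = Matrix.scalar (Fin m) μ := rfl
  rw [spectrum.mem_iff, e, Matrix.isUnit_iff_isUnit_det, isUnit_iff_ne_zero, not_not,
    Matrix.charpoly, eval_det, matPolyEquiv_charmatrix, eval_sub, eval_X, eval_C]

lemma sylvester_pow_commute {q : ℕ} {A : Matrix (Fin q) (Fin q) ℂ}
    {r : ℕ} {B : Matrix (Fin r) (Fin r) ℂ} {X : Matrix (Fin q) (Fin r) ℂ}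
    (h : A * X = X * B) : ∀ k : ℕ, A ^ k * X = X * B ^ k := by
  intro k
  induction k with
  | zero => simp
  | succ k ih =>
    rw [pow_succ, pow_succ, Matrix.mul_assoc, h, ← Matrix.mul_assoc, ih, Matrix.mul_assoc]

lemma sylvester_aeval_commute {q : ℕ} {A : Matrix (Fin q) (Fin q) ℂ}
    {r : ℕ} {B : Matrix (Fin r) (Fin r) ℂ} {X : Matrix (Fin q) (Fin r) ℂ}
    (h : A * X = X * B) (f : ℂ[X]) :
    (aeval A f) * X = X * (aeval B f) := by
  induction f using Polynomial.induction_on' with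
  | add f g hf hg => rw [map_add, map_add, Matrix.add_mul, Matrix.mul_add, hf, hg]
  | monomial k a =>
    simp only [aeval_monomial, Algebra.algebraMap_eq_smul_one, Matrix.smul_mul,
      Matrix.mul_smul, Matrix.one_mul]
    rw [sylvester_pow_commute h]

/-- Let `A` be a real `n × n` matrix and `B` a real `p × p` matrix such
that no complex eigenvalue `λ` of `A` is such that `−λ` is an eigenvalue of `B`.  Then for
every real `n × p` matrix `C`, the Sylvester equation `A X + X B = C` has a unique
solution; equivalently, `X ↦ A X + X B` is bijective. -/
theorem sylvester_equation_unique_solution {n p : ℕ}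
    (A : Matrix (Fin n) (Fin n) ℝ)
    (B : Matrix (Fin p) (Fin p) ℝ)
    (hspec : ∀ μ : ℂ, μ ∈ spectrum ℂ (A.map (Complex.ofReal)) →
      -μ ∉ spectrum ℂ (B.map (Complex.ofReal))) :
    (∀ C : Matrix (Fin n) (Fin p) ℝ, ∃! X : Matrix (Fin n) (Fin p) ℝ, A * X + X * B = C) ∧
      Function.Bijective (fun X : Matrix (Fin n) (Fin p) ℝ => A * X + X * B) := by
  -- the Sylvester operator as a linear map
  set T : Matrix (Fin n) (Fin p) ℝ →ₗ[ℝ] Matrix (Fin n) (Fin p) ℝ :=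
    { toFun := fun X => A * X + X * B
      map_add' := by
        intro X Y
        simp only [Matrix.mul_add, Matrix.add_mul]
        abel
      map_smul' := by
        intro c X
        simp [Matrix.mul_smul, Matrix.smul_mul, smul_add] } with hT
  -- injectivity
  have hinj : Function.Injective T := by
    rw [← LinearMap.ker_eq_bot, LinearMap.ker_eq_bot']
    intro X hX
    have hX : A * X + X * B = 0 := hX
    rcases Nat.eq_zero_or_pos n with hn | hn
    · subst hn; ext i j; exact i.elim0
    rcases Nat.eq_zero_or_pos p with hp | hp
    · subst hp; ext i j; exact j.elim0
    -- pass to ℂ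
    set A' : Matrix (Fin n) (Fin n) ℂ := A.map Complex.ofReal with hA'
    set B' : Matrix (Fin p) (Fin p) ℂ := B.map Complex.ofReal with hB'
    set X' : Matrix (Fin n) (Fin p) ℂ := X.map Complex.ofReal with hX'
    have hmul : A' * X' = X' * (-B') := by
      have h0' : A' * X' + X' * B' = 0 := by
        ext i j
        have h0 := congrFun (congrFun hX i) j
        simp only [Matrix.add_apply, Matrix.mul_apply, Matrix.zero_apply] at h0
        have h1 := congrArg (Complex.ofReal) h0
        push_cast at h1
        simpa [hA', hB', hX', Matrix.mul_apply, Matrix.add_apply, Matrix.map_apply] using h1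
      rw [Matrix.mul_neg]
      exact eq_neg_of_add_eq_zero_left h0'
    -- apply the characteristic polynomial of A'
    have key := sylvester_aeval_commute hmul A'.charpoly
    rw [Matrix.aeval_self_charpoly, Matrix.zero_mul] at key
    -- `aeval (-B') A'.charpoly` is a unit
    have hunit : IsUnit (aeval (-B') A'.charpoly) := by
      by_contra hcon
      rw [← spectrum.zero_mem_iff ℂ] at hcon
      have hdeg : 0 < A'.charpoly.degree := by
        rw [Matrix.charpoly_degree_eq_dim, Fintype.card_fin]
        exact_mod_cast hn
      rw [spectrum.map_polynomial_aeval_of_degree_pos (-B') A'.charpoly hdeg] at hcon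
      obtain ⟨μ, hμB, hμA⟩ := hcon
      have h1 : μ ∈ spectrum ℂ A' := (mem_spectrum_iff_eval_charpoly A' μ).mpr hμA
      have h2 : -μ ∈ spectrum ℂ B' := by
        rw [← spectrum.neg_eq] at hμB
        simpa using hμB
      exact hspec μ h1 h2
    -- hence X' = 0 and X = 0
    have hX'0 : X' = 0 := by
      have hdet : IsUnit (aeval (-B') A'.charpoly).det :=
        (Matrix.isUnit_iff_isUnit_det _).mp hunit
      calc X' = X' * (aeval (-B') A'.charpoly) * (aeval (-B') A'.charpoly)⁻¹ := by
              rw [Matrix.mul_assoc, Matrix.mul_nonsing_inv _ hdet, Matrix.mul_one]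
        _ = (0 : Matrix (Fin n) (Fin p) ℂ) * (aeval (-B') A'.charpoly)⁻¹ := by rw [← key]
        _ = 0 := Matrix.zero_mul _
    ext i j
    have h3 := congrFun (congrFun hX'0 i) j
    simpa [hX', Matrix.map_apply, Complex.ofReal_eq_zero] using h3
  have hbij : Function.Bijective T :=
    ⟨hinj, LinearMap.injective_iff_surjective.mp hinj⟩
  refine ⟨fun C => ?_, hbij⟩
  obtain ⟨X, hXC⟩ := hbij.2 C
  exact ⟨X, hXC, fun Y hY => hbij.1 (show T Y = T X from hY.trans hXC.symm)⟩
end
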